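/- arXiv:2210.15260 — 2 statements merged into one kernel-verified Lean document; each statement's English description precedes it below -/
import Mathlib

section
/- The operator X acts bidiagonally on the Pastro polynomial basis: for every nonnegative integer n and all real x, (x - q) P_n(q^{-1}x; a, b; q) + (q - bx) P_n(x; a, b; q) = q^{-n} (1 - b q^n) P_{n+1}(x; a, b; q) + q (1 - a^{-1} b q^{-n}) P_n(x; a, b; q). -/
/-!
Expand both sides in powers of `x`. After moving `q (1 - a⁻¹ b q^{-n}) P_n(x)` to the left, the
operator sends `x^k` to `(q^{-k} - b) x^{k+1} + (a⁻¹ b q^{1-n} - q^{1-k}) x^k`, so the identity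
amounts to one relation between `c_{n,k}`, `c_{n,k+1}` and `c_{n+1,k+1}` for each `k`, plus one
for the constant terms. Peeling a single factor off each q-Pochhammer symbol gives the ratios
`c_{n,k+1} / c_{n,k}` and `c_{n+1,k+1} / c_{n,k}` as explicit rational functions of `q^k` and
`q^n`, and each relation becomes an identity of rational functions.
-/

/-- The q-Pochhammer symbol `(z;q)_k = ∏_{j=0}^{k-1} (1 - z q^j)`. -/
noncomputable def qPoch (q z : ℝ) (k : ℕ) : ℝ :=
  ∏ j ∈ Finset.range k, (1 - z * q ^ j)

/-- Coefficient `c_{n,k}` of the monic Pastro polynomial. -/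
noncomputable def pastroCoeff (q a b : ℝ) (n k : ℕ) : ℝ :=
  (qPoch q (a⁻¹ * b * q ^ (1 - (n : ℤ))) n * qPoch q q n /
      (qPoch q (q ^ (-(n : ℤ))) n * qPoch q b n)) *
    (qPoch q (q ^ (-(n : ℤ))) k * qPoch q b k /
      (qPoch q (a⁻¹ * b * q ^ (1 - (n : ℤ))) k * qPoch q q k))

/-- The monic Pastro polynomial `P_n(x;a,b;q)`. -/
noncomputable def pastroP (q a b : ℝ) (n : ℕ) (x : ℝ) : ℝ :=
  ∑ k ∈ Finset.range (n + 1), pastroCoeff q a b n k * x ^ k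

open Finset

theorem sum_range_bidiagonal_eq {R : Type*} [CommSemiring R] {c d α β : ℕ → R} {n : ℕ}
    (hc : c (n + 1) = 0) (h0 : β 0 * c 0 = d 0)
    (hsucc : ∀ k ∈ range (n + 1), α k * c k + β (k + 1) * c (k + 1) = d (k + 1)) (x : R) :
    ∑ k ∈ range (n + 1), (α k * c k * x ^ (k + 1) + β k * c k * x ^ k) =
      ∑ k ∈ range (n + 2), d k * x ^ k := by
  have hβ : ∑ k ∈ range (n + 1), β k * c k * x ^ k =
      ∑ k ∈ range (n + 2), β k * c k * x ^ k := by
    rw [sum_range_succ _ (n + 1), hc, mul_zero, zero_mul, add_zero]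
  rw [sum_add_distrib, hβ, sum_range_succ' (fun k => β k * c k * x ^ k),
    sum_range_succ' (fun k => d k * x ^ k), ← h0, ← add_assoc, ← sum_add_distrib]
  congr 1
  refine sum_congr rfl fun k hk => ?_
  rw [← hsucc k hk]
  ring

theorem qPoch_zero (q z : ℝ) : qPoch q z 0 = 1 := prod_range_zero _

theorem qPoch_succ (q z : ℝ) (k : ℕ) : qPoch q z (k + 1) = qPoch q z k * (1 - z * q ^ k) :=
  prod_range_succ _ _

theorem qPoch_succ' (q z : ℝ) (k : ℕ) : qPoch q z (k + 1) = (1 - z) * qPoch q (z * q) k := by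
  rw [qPoch, prod_range_succ', mul_comm]
  simp only [qPoch, pow_zero, mul_one, pow_succ', mul_assoc]

theorem zpow_neg_add_one_mul_self {G₀ : Type*} [GroupWithZero G₀] {x : G₀} (hx : x ≠ 0)
    (n : ℤ) :
    x ^ (-(n + 1)) * x = x ^ (-n) := by
  rw [← zpow_add_one₀ hx, neg_add, neg_add_cancel_right]

theorem zpow_neg_mul_self {G₀ : Type*} [GroupWithZero G₀] {x : G₀} (hx : x ≠ 0) (n : ℤ) :
    x ^ (-n) * x = x ^ (1 - n) := by
  rw [← zpow_add_one₀ hx, neg_add_eq_sub]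

section pastroCoeff

variable {q a b : ℝ}

theorem pastroCoeff_eq_zero_of_lt (hq : q ≠ 0) {n k : ℕ} (h : n < k) :
    pastroCoeff q a b n k = 0 := by
  have : qPoch q (q ^ (-(n : ℤ))) k = 0 :=
    prod_eq_zero (mem_range.2 h) (by rw [← zpow_natCast q n, ← zpow_add₀ hq]; simp)
  rw [pastroCoeff, this, zero_mul, zero_div, mul_zero]

theorem pastroCoeff_succ_right (n k : ℕ) :
    pastroCoeff q a b n (k + 1) = pastroCoeff q a b n k *
      ((1 - q ^ (-(n : ℤ)) * q ^ k) * (1 - b * q ^ k) /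
        ((1 - a⁻¹ * b * q ^ (1 - (n : ℤ)) * q ^ k) * (1 - q * q ^ k))) := by
  simp only [pastroCoeff, qPoch_succ, div_eq_mul_inv, mul_inv]
  ring

/-- `(z;q)_{m+1} = (1 - z) (zq;q)_m` turns the parameters `q^{-n-1}`, `a⁻¹ b q^{-n}` of
`c_{n+1,·}` into the parameters `q^{-n}`, `a⁻¹ b q^{1-n}` of `c_{n,·}`. -/
theorem pastroCoeff_succ_left_eq (hq : q ≠ 0) (n k : ℕ) :
    pastroCoeff q a b (n + 1) k =
      (1 - a⁻¹ * b * q ^ (-(n : ℤ))) * qPoch q (a⁻¹ * b * q ^ (1 - (n : ℤ))) n *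
          (qPoch q q n * (1 - q * q ^ n)) /
        ((1 - q ^ (-((n : ℤ) + 1))) * qPoch q (q ^ (-(n : ℤ))) n *
          (qPoch q b n * (1 - b * q ^ n))) *
      (qPoch q (q ^ (-((n : ℤ) + 1))) k * qPoch q b k /
        (qPoch q (a⁻¹ * b * q ^ (-(n : ℤ))) k * qPoch q q k)) := by
  rw [pastroCoeff, Nat.cast_succ, sub_add_cancel_right, qPoch_succ' q (a⁻¹ * b * _) n,
    qPoch_succ' q (q ^ _) n, zpow_neg_add_one_mul_self hq, mul_assoc (a⁻¹ * b),
    zpow_neg_mul_self hq, qPoch_succ q q, qPoch_succ q b]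

theorem pastroCoeff_succ_zero (hq : q ≠ 0) (n : ℕ) :
    pastroCoeff q a b (n + 1) 0 = pastroCoeff q a b n 0 *
      ((1 - a⁻¹ * b * q ^ (-(n : ℤ))) * (1 - q * q ^ n) /
        ((1 - q ^ (-((n : ℤ) + 1))) * (1 - b * q ^ n))) := by
  rw [pastroCoeff_succ_left_eq hq, pastroCoeff]
  simp only [qPoch_zero, div_eq_mul_inv, mul_inv]
  ring

theorem pastroCoeff_succ_succ (hq : q ≠ 0) {n : ℕ} (hu : 1 - q ^ (-((n : ℤ) + 1)) ≠ 0)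
    (hw : 1 - a⁻¹ * b * q ^ (-(n : ℤ)) ≠ 0) (k : ℕ) :
    pastroCoeff q a b (n + 1) (k + 1) = pastroCoeff q a b n k *
      ((1 - q * q ^ n) * (1 - b * q ^ k) / ((1 - b * q ^ n) * (1 - q * q ^ k))) := by
  calc pastroCoeff q a b (n + 1) (k + 1)
      = pastroCoeff q a b n k *
          ((1 - q * q ^ n) * (1 - b * q ^ k) / ((1 - b * q ^ n) * (1 - q * q ^ k))) *
          ((1 - q ^ (-((n : ℤ) + 1))) * (1 - q ^ (-((n : ℤ) + 1)))⁻¹) *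
          ((1 - a⁻¹ * b * q ^ (-(n : ℤ))) * (1 - a⁻¹ * b * q ^ (-(n : ℤ)))⁻¹) := by
        rw [pastroCoeff_succ_left_eq hq, qPoch_succ' q (q ^ _) k, qPoch_succ' q (a⁻¹ * b * _) k,
          zpow_neg_add_one_mul_self hq, mul_assoc (a⁻¹ * b), zpow_neg_mul_self hq,
          qPoch_succ q b k, qPoch_succ q q k, pastroCoeff]
        simp only [div_eq_mul_inv, mul_inv]
        ring
    _ = _ := by rw [mul_inv_cancel₀ hu, mul_inv_cancel₀ hw, mul_one, mul_one]

variable (hq : q ≠ 0) (hq1 : ∀ k : ℤ, k ≠ 0 → q ^ k ≠ 1)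
  (hbq : ∀ m : ℤ, b * q ^ m ≠ 1) (habq : ∀ m : ℤ, a⁻¹ * b * q ^ m ≠ 1)
include hq

include hq1 hbq in
theorem pastroCoeff_bidiagonal_zero (n : ℕ) :
    (a⁻¹ * b * q ^ (1 - (n : ℤ)) - q) * pastroCoeff q a b n 0 =
      q ^ (-(n : ℤ)) * (1 - b * q ^ n) * pastroCoeff q a b (n + 1) 0 := by
  have hu : 1 - q ^ (-((n : ℤ) + 1)) ≠ 0 :=
    sub_ne_zero_of_ne (Ne.symm (hq1 (-((n : ℤ) + 1)) (by omega)))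
  have hb : 1 - b * q ^ n ≠ 0 := sub_ne_zero_of_ne (Ne.symm (by simpa using hbq n))
  have key : (a⁻¹ * b * q ^ (1 - (n : ℤ)) - q) * (1 - q ^ (-((n : ℤ) + 1))) =
      q ^ (-(n : ℤ)) * (1 - a⁻¹ * b * q ^ (-(n : ℤ))) * (1 - q * q ^ n) := by
    simp only [zpow_neg, zpow_sub₀ hq, zpow_add_one₀ hq, zpow_one, zpow_natCast]
    have hqn : q ^ n ≠ 0 := pow_ne_zero n hq
    field_simp
    ring
  have ratio : pastroCoeff q a b (n + 1) 0 * ((1 - q ^ (-((n : ℤ) + 1))) * (1 - b * q ^ n)) =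
      pastroCoeff q a b n 0 * ((1 - a⁻¹ * b * q ^ (-(n : ℤ))) * (1 - q * q ^ n)) := by
    rw [pastroCoeff_succ_zero hq, mul_assoc, div_mul_cancel₀ _ (mul_ne_zero hu hb)]
  apply mul_right_cancel₀ (mul_ne_zero hu hb)
  linear_combination pastroCoeff q a b n 0 * (1 - b * q ^ n) * key -
    q ^ (-(n : ℤ)) * (1 - b * q ^ n) * ratio

include hq1 hbq habq in
theorem pastroCoeff_bidiagonal_succ (n k : ℕ) :
    (q⁻¹ ^ k - b) * pastroCoeff q a b n k +
        (a⁻¹ * b * q ^ (1 - (n : ℤ)) - q⁻¹ ^ k) * pastroCoeff q a b n (k + 1) =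
      q ^ (-(n : ℤ)) * (1 - b * q ^ n) * pastroCoeff q a b (n + 1) (k + 1) := by
  have hu : 1 - q ^ (-((n : ℤ) + 1)) ≠ 0 :=
    sub_ne_zero_of_ne (Ne.symm (hq1 (-((n : ℤ) + 1)) (by omega)))
  have hw : 1 - a⁻¹ * b * q ^ (-(n : ℤ)) ≠ 0 := sub_ne_zero_of_ne (habq _).symm
  have hb : 1 - b * q ^ n ≠ 0 := sub_ne_zero_of_ne (Ne.symm (by simpa using hbq n))
  have hwk : 1 - a⁻¹ * b * q ^ (1 - (n : ℤ)) * q ^ k ≠ 0 := by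
    refine sub_ne_zero_of_ne (Ne.symm ?_)
    simpa [zpow_add₀ hq, mul_assoc] using habq (1 - n + k)
  have hqk : 1 - q * q ^ k ≠ 0 := by
    have := hq1 (k + 1 : ℕ) (by omega)
    rw [zpow_natCast, pow_succ'] at this
    exact sub_ne_zero_of_ne this.symm
  have ratio_right : pastroCoeff q a b n (k + 1) *
        ((1 - a⁻¹ * b * q ^ (1 - (n : ℤ)) * q ^ k) * (1 - q * q ^ k)) =
      pastroCoeff q a b n k * ((1 - q ^ (-(n : ℤ)) * q ^ k) * (1 - b * q ^ k)) := by
    rw [pastroCoeff_succ_right, mul_assoc, div_mul_cancel₀ _ (mul_ne_zero hwk hqk)]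
  have ratio_up : pastroCoeff q a b (n + 1) (k + 1) * ((1 - b * q ^ n) * (1 - q * q ^ k)) =
      pastroCoeff q a b n k * ((1 - q * q ^ n) * (1 - b * q ^ k)) := by
    rw [pastroCoeff_succ_succ hq hu hw, mul_assoc, div_mul_cancel₀ _ (mul_ne_zero hb hqk)]
  have key : ∀ w : ℝ, (q⁻¹ ^ k - b) * (1 - w * q ^ k) * (1 - q * q ^ k) +
        (w - q⁻¹ ^ k) * (1 - q ^ (-(n : ℤ)) * q ^ k) * (1 - b * q ^ k) =
      q ^ (-(n : ℤ)) * (1 - q * q ^ n) * (1 - b * q ^ k) * (1 - w * q ^ k) := by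
    intro w
    simp only [zpow_neg, zpow_natCast, inv_pow]
    have hqn : q ^ n ≠ 0 := pow_ne_zero n hq
    have hqk' : q ^ k ≠ 0 := pow_ne_zero k hq
    field_simp
    ring
  apply mul_right_cancel₀ (mul_ne_zero (mul_ne_zero hwk hqk) (mul_ne_zero hb hqk))
  linear_combination
    pastroCoeff q a b n k * (1 - b * q ^ n) * (1 - q * q ^ k) *
      key (a⁻¹ * b * q ^ (1 - (n : ℤ))) +
    (a⁻¹ * b * q ^ (1 - (n : ℤ)) - q⁻¹ ^ k) * ((1 - b * q ^ n) * (1 - q * q ^ k)) *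
      ratio_right -
    q ^ (-(n : ℤ)) * (1 - b * q ^ n) *
      ((1 - a⁻¹ * b * q ^ (1 - (n : ℤ)) * q ^ k) * (1 - q * q ^ k)) * ratio_up

end pastroCoeff

theorem pastro_X_bidiagonal_general (q a b : ℝ) (hq : q ≠ 0) (hq1 : ∀ k : ℤ, k ≠ 0 → q ^ k ≠ 1)
    (hbq : ∀ m : ℤ, b * q ^ m ≠ 1) (habq : ∀ m : ℤ, a⁻¹ * b * q ^ m ≠ 1)
    (n : ℕ) (x : ℝ) :
    (x - q) * pastroP q a b n (q⁻¹ * x) + (q - b * x) * pastroP q a b n x =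
      q ^ (-(n : ℤ)) * (1 - b * q ^ n) * pastroP q a b (n + 1) x +
        q * (1 - a⁻¹ * b * q ^ (-(n : ℤ))) * pastroP q a b n x := by
  have hdiag : q * (1 - a⁻¹ * b * q ^ (-(n : ℤ))) = q - a⁻¹ * b * q ^ (1 - (n : ℤ)) := by
    rw [zpow_sub₀ hq, zpow_one, zpow_neg]
    ring
  have hsplit : (x - q) * pastroP q a b n (q⁻¹ * x) + (q - b * x) * pastroP q a b n x =
      ∑ k ∈ range (n + 1), ((q⁻¹ ^ k - b) * pastroCoeff q a b n k * x ^ (k + 1) +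
        (a⁻¹ * b * q ^ (1 - (n : ℤ)) - q * q⁻¹ ^ k) * pastroCoeff q a b n k * x ^ k) +
      (q - a⁻¹ * b * q ^ (1 - (n : ℤ))) * pastroP q a b n x := by
    simp only [pastroP, mul_sum, ← sum_add_distrib]
    refine sum_congr rfl fun k _ => ?_
    rw [mul_pow]
    ring
  have hbidiag :=
    sum_range_bidiagonal_eq (pastroCoeff_eq_zero_of_lt (a := a) (b := b) hq n.lt_succ_self)
    (α := fun k => q⁻¹ ^ k - b)
    (β := fun k => a⁻¹ * b * q ^ (1 - (n : ℤ)) - q * q⁻¹ ^ k)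
    (d := fun k => q ^ (-(n : ℤ)) * (1 - b * q ^ n) * pastroCoeff q a b (n + 1) k)
    (by rw [pow_zero, mul_one]; exact pastroCoeff_bidiagonal_zero hq hq1 hbq n)
    (fun k _ => by
      rw [pow_succ', mul_inv_cancel_left₀ hq]
      exact pastroCoeff_bidiagonal_succ hq hq1 hbq habq n k) x
  rw [hsplit, hbidiag, hdiag, pastroP.eq_1 q a b (n + 1), mul_sum]
  simp only [mul_assoc]

/-- The operator `X` acts bidiagonally on the Pastro polynomial basis. -/
theorem pastro_X_bidiagonal (q a b : ℝ) (hq : q ≠ 0) (hq1 : ∀ k : ℤ, k ≠ 0 → q ^ k ≠ 1)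
    (ha : a ≠ 0) (hb : b ≠ 0)
    (hbq : ∀ m : ℤ, b * q ^ m ≠ 1) (habq : ∀ m : ℤ, a⁻¹ * b * q ^ m ≠ 1)
    (n : ℕ) (x : ℝ) :
    (x - q) * pastroP q a b n (q⁻¹ * x) + (q - b * x) * pastroP q a b n x =
      q ^ (-(n : ℤ)) * (1 - b * q ^ n) * pastroP q a b (n + 1) x +
        q * (1 - a⁻¹ * b * q ^ (-(n : ℤ))) * pastroP q a b n x :=
  pastro_X_bidiagonal_general q a b hq hq1 hbq habq n x
end

section
/- The discrete weight function of the Pastro biorthogonality is invariant under the simultaneous substitutions b ↦ b^{-1} q^{2-N} and s ↦ N - s - 1: for every positive integer N and every s ∈ {0, 1, ..., N-1}, w_s(b) = w_{N-1-s}(b^{-1} q^{2-N}), where w_s(b) = [1/(b;q)_{N-1}] · [(q^{1-N};q)_s / (q;q)_s] · (b q^{N-1})^s. -/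
/-- The discrete weight `w_s` of the Pastro biorthogonality on the real line. -/
noncomputable def pastroW (q b : ℝ) (N s : ℕ) : ℝ :=
  (qPoch q b (N - 1))⁻¹ * (qPoch q (q ^ (1 - (N : ℤ))) s / qPoch q q s) *
    (b * q ^ ((N : ℤ) - 1)) ^ s

theorem Nat.add_choose_two (m n : ℕ) :
    (m + n).choose 2 = m.choose 2 + n.choose 2 + m * n := by
  induction n with
  | zero => simp
  | succ n ih =>
    rw [← add_assoc, Nat.choose_succ_succ', ih, Nat.choose_succ_succ', Nat.choose_one_right,
      Nat.choose_one_right]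
    ring

theorem Nat.choose_two_mul_two_add (n : ℕ) : n.choose 2 * 2 + n = n * n := by
  induction n with
  | zero => rfl
  | succ n ih => rw [Nat.choose_succ_succ', Nat.choose_one_right]; linarith

theorem Finset.prod_range_pow {M : Type*} [CommMonoid M] (x : M) (n : ℕ) :
    ∏ j ∈ Finset.range n, x ^ j = x ^ n.choose 2 := by
  rw [Finset.prod_pow_eq_pow_sum, Finset.sum_range_id, Nat.choose_two_right]

theorem qPoch_add (q z : ℝ) (m k : ℕ) :
    qPoch q z (m + k) = qPoch q z m * qPoch q (z * q ^ m) k := by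
  simp only [qPoch, Finset.prod_range_add, pow_add, mul_assoc]

theorem qPoch_ne_zero {q z : ℝ} {k : ℕ} (h : ∀ j < k, z * q ^ j ≠ 1) : qPoch q z k ≠ 0 :=
  Finset.prod_ne_zero_iff.mpr fun j hj => sub_ne_zero.mpr (h j (Finset.mem_range.mp hj)).symm

theorem qPoch_self_ne_zero {q : ℝ} (hq : ∀ k : ℤ, k ≠ 0 → q ^ k ≠ 1) (n : ℕ) :
    qPoch q q n ≠ 0 :=
  qPoch_ne_zero fun j _ => by rw [← pow_succ', ← zpow_natCast]; exact hq _ (by omega)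

theorem qPoch_reverse {q z : ℝ} (hq : q ≠ 0) (hz : z ≠ 0) (n : ℕ) :
    qPoch q z n = (-z) ^ n * q ^ n.choose 2 * qPoch q (z⁻¹ * q ^ (1 - (n : ℤ))) n := by
  rw [← Finset.prod_range_pow, ← Finset.prod_range_reflect (fun j => q ^ j), qPoch,
    ← Finset.prod_range_reflect, qPoch, Finset.pow_eq_prod_const, ← Finset.prod_mul_distrib,
    ← Finset.prod_mul_distrib]
  refine Finset.prod_congr rfl fun j hj => ?_
  have hj : j + 1 ≤ n := Finset.mem_range.mp hj
  have hpow : q ^ (1 - (n : ℤ)) * q ^ j * q ^ (n - 1 - j) = 1 := by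
    rw [← zpow_natCast, ← zpow_natCast, ← zpow_add₀ hq, ← zpow_add₀ hq]
    convert zpow_zero q using 2
    omega
  linear_combination -hpow - q ^ (1 - (n : ℤ)) * q ^ j * q ^ (n - 1 - j) * mul_inv_cancel₀ hz

theorem qPoch_pow_neg_mul {q : ℝ} (hq : q ≠ 0) (s t : ℕ) :
    qPoch q (q ^ (-((s + t : ℕ) : ℤ))) s * (q ^ (s + t)) ^ s * qPoch q q t =
      (-1) ^ s * q ^ s.choose 2 * qPoch q q (s + t) := by
  have hbase : (q ^ (-((s + t : ℕ) : ℤ)))⁻¹ * q ^ (1 - (s : ℤ)) = q * q ^ t := by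
    rw [← zpow_neg, neg_neg, ← zpow_add₀ hq, ← pow_succ', ← zpow_natCast]
    congr 1
    push_cast
    ring
  have hpow : (-q ^ (-((s + t : ℕ) : ℤ))) ^ s * (q ^ (s + t)) ^ s = (-1) ^ s := by
    rw [← mul_pow, neg_mul, zpow_neg, zpow_natCast, inv_mul_cancel₀ (pow_ne_zero _ hq)]
  have hsplit : qPoch q q (s + t) = qPoch q q t * qPoch q (q * q ^ t) s := by
    rw [add_comm, qPoch_add]
  rw [qPoch_reverse hq (zpow_ne_zero _ hq), hbase, hsplit]
  linear_combination q ^ s.choose 2 * qPoch q (q * q ^ t) s * qPoch q q t * hpow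

theorem pastroW_succ (q b : ℝ) (n s : ℕ) :
    pastroW q b (n + 1) s =
      (qPoch q b n)⁻¹ * (qPoch q (q ^ (-(n : ℤ))) s / qPoch q q s) * (b * q ^ n) ^ s := by
  simp [pastroW]

theorem pastroW_succ_of_add_eq {q : ℝ} (hq : q ≠ 0) (b : ℝ) {s t n : ℕ} (hst : s + t = n)
    (hQ : qPoch q q t ≠ 0) :
    pastroW q b (n + 1) s = (-1) ^ s * q ^ s.choose 2 * b ^ s / qPoch q b n *
      (qPoch q q n / (qPoch q q s * qPoch q q t)) := by
  subst hst
  have hA := qPoch_pow_neg_mul hq s t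
  rw [mul_assoc] at hA
  rw [pastroW_succ, eq_div_of_mul_eq (mul_ne_zero (pow_ne_zero _ (pow_ne_zero _ hq)) hQ) hA]
  field_simp
  ring

theorem pastro_prefactor_symm {q b : ℝ} (hq : q ≠ 0) (hb : b ≠ 0) (s t : ℕ) :
    (-1) ^ t * q ^ t.choose 2 * (b⁻¹ * q ^ (1 - ((s + t : ℕ) : ℤ))) ^ t /
        qPoch q (b⁻¹ * q ^ (1 - ((s + t : ℕ) : ℤ))) (s + t) =
      (-1) ^ s * q ^ s.choose 2 * b ^ s / qPoch q b (s + t) := by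
  have hu : q ^ (s + t) ≠ 0 := pow_ne_zero _ hq
  have hb' : b⁻¹ * q ^ (1 - ((s + t : ℕ) : ℤ)) * q ^ (s + t) = q / b := by
    rw [mul_assoc, ← zpow_natCast, ← zpow_add₀ hq]; norm_num; ring
  have hexp : q ^ s.choose 2 * (q ^ (s + t)) ^ t =
      q ^ (s + t).choose 2 * q ^ t.choose 2 * q ^ t := by
    rw [← pow_mul, ← pow_add, ← pow_add, ← pow_add]
    congr 1
    nlinarith [Nat.add_choose_two s t, Nat.choose_two_mul_two_add t]
  have hsign : (-1 : ℝ) ^ t * (-1) ^ t = 1 := by rw [← mul_pow]; norm_num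
  rw [eq_div_of_mul_eq (pow_ne_zero t hu) (by rw [← mul_pow, hb'] :
      (b⁻¹ * q ^ (1 - ((s + t : ℕ) : ℤ))) ^ t * (q ^ (s + t)) ^ t = (q / b) ^ t),
    eq_div_of_mul_eq (mul_ne_zero (pow_ne_zero _ (neg_ne_zero.mpr hb)) (pow_ne_zero _ hq))
      (by rw [qPoch_reverse hq hb]; ring : qPoch q (b⁻¹ * q ^ (1 - ((s + t : ℕ) : ℤ))) (s + t) *
        ((-b) ^ (s + t) * q ^ (s + t).choose 2) = qPoch q b (s + t)), div_div_eq_mul_div]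
  congr 1
  rw [div_pow, neg_pow b]
  field_simp
  linear_combination b ^ (s + t) * (-1) ^ s *
    (q ^ (s + t).choose 2 * q ^ t.choose 2 * q ^ t * hsign - hexp)

theorem pastro_weight_symmetry_general (q b : ℝ) (hq : q ≠ 0) (hq1 : ∀ k : ℤ, k ≠ 0 → q ^ k ≠ 1)
    (hb : b ≠ 0)
    (N : ℕ) (s : ℕ) (hs : s < N) :
    pastroW q b N s = pastroW q (b⁻¹ * q ^ (2 - (N : ℤ))) N (N - 1 - s) := by
  obtain ⟨t, rfl⟩ : ∃ t, N = s + t + 1 := ⟨N - s - 1, by omega⟩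
  have hb' : b⁻¹ * q ^ (2 - ((s + t + 1 : ℕ) : ℤ)) = b⁻¹ * q ^ (1 - ((s + t : ℕ) : ℤ)) := by
    push_cast; ring_nf
  rw [show s + t + 1 - 1 - s = t by omega, hb',
    pastroW_succ_of_add_eq hq b rfl (qPoch_self_ne_zero hq1 t),
    pastroW_succ_of_add_eq hq _ (add_comm t s) (qPoch_self_ne_zero hq1 s),
    pastro_prefactor_symm hq hb, mul_comm (qPoch q q t)]

/-- The discrete weight function is invariant under the simultaneous
substitutions `b ↦ b⁻¹ q^(2-N)` and `s ↦ N - s - 1`. -/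
theorem pastro_weight_symmetry (q b : ℝ) (hq : q ≠ 0) (hq1 : ∀ k : ℤ, k ≠ 0 → q ^ k ≠ 1)
    (hb : b ≠ 0) (hbq : ∀ m : ℤ, b * q ^ m ≠ 1)
    (N : ℕ) (hN : 0 < N) (s : ℕ) (hs : s < N) :
    pastroW q b N s = pastroW q (b⁻¹ * q ^ (2 - (N : ℤ))) N (N - 1 - s) :=
  pastro_weight_symmetry_general q b hq hq1 hb N s hs
end
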